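/- Let K be a field of characteristic p > 0 and b ∈ K. The second-order operator D(f,g) = ∂f·∂g - b·∂²f·g from F_0 ⊗ F_b to F_{b+2} is vect(1;N)-invariant: for all h∂ ∈ vect(1;N), L_{h∂}(D(f,g)) = D(L_{h∂}f, g) + D(f, L_{h∂}g), where the weight is 0 on the first source, b on the second source, and b+2 on the target. -/

import Mathlib

open Finset

/-- Multiplication in the divided power algebra `O(1;N)` truncated at `n = p^N`;
elements are given by their coefficients in the basis `u^{(r)}`, `0 ≤ r < n`,
and `u^{(r)} · u^{(s)} = C(r+s, r) u^{(r+s)}` (zero if `r+s ≥ n`). -/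
def dpMul {K : Type*} [Field K] (n : ℕ) (f g : ℕ → K) : ℕ → K :=
  fun t => if t < n then ∑ i ∈ Finset.range (t + 1), ((t.choose i : K) * f i * g (t - i)) else 0

/-- The distinguished derivation `∂` of `O(1;N)`: `∂(u^{(r)}) = u^{(r-1)}`. -/
def dpDer {K : Type*} [Field K] (n : ℕ) (f : ℕ → K) : ℕ → K :=
  fun r => if r + 1 < n then f (r + 1) else 0

/-- Membership in `O(1;N)`: coefficients vanish in degrees `≥ n`. -/
def dpSupp {K : Type*} [Field K] (n : ℕ) (f : ℕ → K) : Prop := ∀ r, n ≤ r → f r = 0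

/-- Berezin-type integral: the coefficient of `u^{(n-1)}`. -/
def dpInt {K : Type*} [Field K] (n : ℕ) (f : ℕ → K) : K := f (n - 1)

/-- Lie derivative along `h∂ ∈ vect(1;N)` acting on the weighted density module
`F_a`: `L_{h∂}(f) = h·∂f + a·f·∂h`. -/
def dpLie {K : Type*} [Field K] (n : ℕ) (a : K) (h f : ℕ → K) : ℕ → K :=
  dpMul n h (dpDer n f) + a • dpMul n f (dpDer n h)

/-! Because `p` divides `C(p^N, k)` for `0 < k < p^N`, the boundary term of the Pascal-rule
computation vanishes and `∂` is a derivation of the commutative algebra `O(1;N)`. The invariance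
of `D` is then an identity that holds for every derivation of every commutative algebra: expand
both sides with the Leibniz rule. -/

section DerivationIdentity
variable {R A : Type*} [CommRing R] [CommRing A] [Algebra R A] (d : Derivation R A A)

-- `d.densityLie a h` is `L_{h∂}` on `F_a`, and `d.secondOrderOp b` is the operator `D`.
def Derivation.densityLie (a : R) (h f : A) : A := h * d f + a • (f * d h)

def Derivation.secondOrderOp (b : R) (f g : A) : A := d f * d g - b • (d (d f) * g)

theorem Derivation.densityLie_secondOrderOp (b : R) (h f g : A) :
    d.densityLie (b + 2) h (d.secondOrderOp b f g) =
      d.secondOrderOp b (d.densityLie 0 h f) g + d.secondOrderOp b f (d.densityLie b h g) := by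
  simp only [densityLie, secondOrderOp, map_add, map_sub, map_smul, leibniz, smul_eq_mul,
    zero_smul, add_zero]
  simp only [Algebra.smul_def, map_add, map_ofNat]
  ring

end DerivationIdentity

section DividedPowerProduct
variable {K : Type*} [Field K] {n : ℕ}

lemma dpSupp_dpMul (f g : ℕ → K) : dpSupp n (dpMul n f g) :=
  fun _ hr => if_neg (by omega)

lemma dpSupp_dpDer (f : ℕ → K) : dpSupp n (dpDer n f) :=
  fun _ hr => if_neg (by omega)

lemma dpDer_of_dpSupp {f : ℕ → K} (hf : dpSupp n f) : dpDer n f = fun r => f (r + 1) := by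
  funext r
  unfold dpDer
  split_ifs with hr
  · rfl
  · exact (hf _ (by omega)).symm

lemma dpMul_comm (f g : ℕ → K) : dpMul n f g = dpMul n g f := by
  funext t
  unfold dpMul
  split_ifs
  · rw [← sum_range_reflect]
    refine sum_congr rfl fun i hi => ?_
    rw [mem_range] at hi
    rw [show t + 1 - 1 - i = t - i by omega, Nat.sub_sub_self (by omega),
      Nat.choose_symm (by omega)]
    ring
  · rfl

lemma dpMul_assoc (f g h : ℕ → K) :
    dpMul n (dpMul n f g) h = dpMul n f (dpMul n g h) := by
  funext t
  unfold dpMul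
  split_ifs with ht
  · calc _ = ∑ i ∈ range (t + 1), ∑ j ∈ range (i + 1),
            (t.choose i : K) * i.choose j * (f j * g (i - j) * h (t - i)) := by
          refine sum_congr rfl fun i hi => ?_
          rw [mem_range] at hi
          rw [if_pos (by omega), mul_sum, sum_mul]
          exact sum_congr rfl fun j _ => by ring
      _ = ∑ j ∈ range (t + 1), ∑ i ∈ Ico j (t + 1),
            (t.choose i : K) * i.choose j * (f j * g (i - j) * h (t - i)) :=
          sum_comm' fun i j => by simp only [mem_range, mem_Ico]; omega
      _ = _ := by
          refine sum_congr rfl fun j hj => ?_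
          rw [mem_range] at hj
          rw [sum_Ico_eq_sum_range, if_pos (by omega), mul_sum]
          refine sum_congr (by rw [Nat.sub_add_comm (by omega)]) fun k hk => ?_
          rw [mem_range] at hk
          have hchoose :
              (t.choose (j + k) : K) * (j + k).choose j = t.choose j * (t - j).choose k := by
            rw [← Nat.cast_mul, ← Nat.cast_mul, Nat.choose_mul (by omega),
              Nat.add_sub_cancel_left]
          rw [hchoose, Nat.add_sub_cancel_left, show t - (j + k) = t - j - k by omega]
          ring
  · rfl

lemma dpMul_add (f g h : ℕ → K) : dpMul n f (g + h) = dpMul n f g + dpMul n f h := by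
  funext t
  simp only [dpMul, Pi.add_apply]
  split_ifs
  · rw [← sum_add_distrib]
    exact sum_congr rfl fun i _ => by ring
  · simp

lemma dpMul_smul (c : K) (f g : ℕ → K) : dpMul n f (c • g) = c • dpMul n f g := by
  funext t
  simp only [dpMul, Pi.smul_apply, smul_eq_mul]
  split_ifs
  · rw [mul_sum]
    exact sum_congr rfl fun i _ => by ring
  · simp

lemma one_dpMul {f : ℕ → K} (hf : dpSupp n f) : dpMul n (Pi.single 0 1) f = f := by
  funext t
  unfold dpMul
  split_ifs with ht
  · rw [sum_eq_single 0 (fun i _ hi => by simp [hi]) (by simp)]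
    simp
  · exact (hf t (by omega)).symm

lemma sum_range_choose_mul_eq_zero_of_dpSupp (hn : ∀ k, 0 < k → k < n → (n.choose k : K) = 0)
    {f g : ℕ → K} (hf : dpSupp n f) (hg : dpSupp n g) :
    ∑ i ∈ range (n + 1), (n.choose i : K) * (f i * g (n - i)) = 0 := by
  refine sum_eq_zero fun i hi => ?_
  rw [mem_range] at hi
  rcases Nat.eq_zero_or_pos i with rfl | hi0
  · simp [hg n le_rfl]
  rcases (Nat.lt_succ_iff.1 hi).lt_or_eq with hin | rfl
  · simp [hn i hi0 hin]
  · simp [hf i le_rfl]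

lemma dpDer_dpMul (hn : ∀ k, 0 < k → k < n → (n.choose k : K) = 0) {f g : ℕ → K}
    (hf : dpSupp n f) (hg : dpSupp n g) :
    dpDer n (dpMul n f g) = dpMul n (dpDer n f) g + dpMul n f (dpDer n g) := by
  rw [dpDer_of_dpSupp (dpSupp_dpMul f g), dpDer_of_dpSupp hf, dpDer_of_dpSupp hg]
  funext r
  have pascal := sum_choose_succ_mul (fun i j => f i * g j) r
  simp only [dpMul, Pi.add_apply, mul_assoc] at pascal ⊢
  have shift : ∑ i ∈ range (r + 1), (r.choose i : K) * (f i * g (r - i + 1)) =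
      ∑ i ∈ range (r + 1), (r.choose i : K) * (f i * g (r + 1 - i)) :=
    sum_congr rfl fun i hi => by
      rw [mem_range] at hi
      rw [show r - i + 1 = r + 1 - i by omega]
  split_ifs with h1 h2
  · rw [shift]
    exact pascal.trans (add_comm _ _)
  · omega
  · obtain rfl : r + 1 = n := by omega
    rw [shift, add_comm, ← pascal]
    exact (sum_range_choose_mul_eq_zero_of_dpSupp hn hf hg).symm
  · simp

variable (K n) in
def dpDerLinearMap : (ℕ → K) →ₗ[K] (ℕ → K) where
  toFun := dpDer n
  map_add' f g := by funext r; simp only [dpDer, Pi.add_apply]; split_ifs <;> simp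
  map_smul' c f := by funext r; simp only [dpDer, Pi.smul_apply, smul_eq_mul]; split_ifs <;> simp

end DividedPowerProduct

section
variable (K : Type*) [Field K] (n : ℕ)

def dpSubmodule : Submodule K (ℕ → K) where
  carrier := {f | dpSupp n f}
  add_mem' hf hg r hr := by simp [hf r hr, hg r hr]
  zero_mem' _ _ := rfl
  smul_mem' c f hf r hr := by simp [hf r hr]

-- A `def`, not an `abbrev`: the pointwise ring structure of `ℕ → K` must not be visible here.
def DPAlgebra : Type _ := dpSubmodule K n

end

namespace DPAlgebra
variable {K : Type*} [Field K] {n : ℕ}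

instance : AddCommGroup (DPAlgebra K n) := inferInstanceAs (AddCommGroup (dpSubmodule K n))

instance : Module K (DPAlgebra K n) := inferInstanceAs (Module K (dpSubmodule K n))

instance [NeZero n] : CommRing (DPAlgebra K n) :=
  { (inferInstance : AddCommGroup (DPAlgebra K n)) with
    mul x y := ⟨dpMul n x.1 y.1, dpSupp_dpMul _ _⟩
    one := ⟨Pi.single 0 1, fun r hr => Pi.single_eq_of_ne (by have := NeZero.pos n; omega) _⟩
    mul_assoc x y z := Subtype.ext (dpMul_assoc x.1 y.1 z.1)
    mul_comm x y := Subtype.ext (dpMul_comm x.1 y.1)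
    one_mul x := Subtype.ext (one_dpMul x.2)
    mul_one x := Subtype.ext ((dpMul_comm _ _).trans (one_dpMul x.2))
    left_distrib x y z := Subtype.ext (dpMul_add x.1 y.1 z.1)
    right_distrib x y z := Subtype.ext (by
      show dpMul n (x.1 + y.1) z.1 = dpMul n x.1 z.1 + dpMul n y.1 z.1
      simp only [dpMul_comm _ z.1, dpMul_add])
    zero_mul x := Subtype.ext (by
      show dpMul n 0 x.1 = 0
      simpa [dpMul_comm _ x.1] using dpMul_smul 0 x.1 0)
    mul_zero x := Subtype.ext (by
      show dpMul n x.1 0 = 0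
      simpa using dpMul_smul 0 x.1 0) }

instance [NeZero n] : Algebra K (DPAlgebra K n) :=
  have mul_smul : ∀ (c : K) (x y : DPAlgebra K n), x * c • y = c • (x * y) :=
    fun c x y => Subtype.ext (dpMul_smul c x.1 y.1)
  Algebra.ofModule (fun c x y => by rw [mul_comm, mul_smul, mul_comm]) mul_smul

def derivation [NeZero n] (hn : ∀ k, 0 < k → k < n → (n.choose k : K) = 0) :
    Derivation K (DPAlgebra K n) (DPAlgebra K n) :=
  Derivation.mk' ((dpDerLinearMap K n).restrict fun f _ => dpSupp_dpDer f) fun x y =>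
    Subtype.ext (by
      show dpDer n (dpMul n x.1 y.1) = dpMul n x.1 (dpDer n y.1) + dpMul n y.1 (dpDer n x.1)
      rw [dpDer_dpMul hn x.2 y.2, add_comm, dpMul_comm y.1])

end DPAlgebra

theorem CharP.cast_choose_prime_pow_eq_zero {R : Type*} [Semiring R] {p : ℕ} [CharP R p]
    (hp : p.Prime) (N : ℕ) {k : ℕ} (hk0 : 0 < k) (hk : k < p ^ N) :
    ((p ^ N).choose k : R) = 0 :=
  (CharP.cast_eq_zero_iff R p _).2 (hp.dvd_choose_pow hk0.ne' hk.ne)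

theorem order2_invariant_general {K : Type*} [Field K] (p N : ℕ) (hp : p.Prime)
    [CharP K p] (b : K) (h f g : ℕ → K)
    (hh : dpSupp (p ^ N) h) (hf : dpSupp (p ^ N) f) (hg : dpSupp (p ^ N) g) :
    dpLie (p ^ N) (b + 2) h
        (dpMul (p ^ N) (dpDer (p ^ N) f) (dpDer (p ^ N) g)
          - b • dpMul (p ^ N) (dpDer (p ^ N) (dpDer (p ^ N) f)) g)
      = (dpMul (p ^ N) (dpDer (p ^ N) (dpLie (p ^ N) 0 h f)) (dpDer (p ^ N) g)
          - b • dpMul (p ^ N) (dpDer (p ^ N) (dpDer (p ^ N) (dpLie (p ^ N) 0 h f))) g)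
        + (dpMul (p ^ N) (dpDer (p ^ N) f) (dpDer (p ^ N) (dpLie (p ^ N) b h g))
          - b • dpMul (p ^ N) (dpDer (p ^ N) (dpDer (p ^ N) f)) (dpLie (p ^ N) b h g)) := by
  have : NeZero (p ^ N) := ⟨pow_ne_zero N hp.ne_zero⟩
  let d : Derivation K (DPAlgebra K (p ^ N)) (DPAlgebra K (p ^ N)) :=
    DPAlgebra.derivation fun _ hk0 hk => CharP.cast_choose_prime_pow_eq_zero hp N hk0 hk
  exact congrArg Subtype.val (d.densityLie_secondOrderOp b ⟨h, hh⟩ ⟨f, hf⟩ ⟨g, hg⟩)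

/-- The second-order operator D(f,g) = ∂f·∂g - b·∂²f·g : F_0 ⊗ F_b → F_{b+2}
is vect(1;N)-invariant. -/
theorem order2_invariant {K : Type*} [Field K] (p N : ℕ) (hp : p.Prime)
    (hN : 1 ≤ N) [CharP K p] (b : K) (h f g : ℕ → K)
    (hh : dpSupp (p ^ N) h) (hf : dpSupp (p ^ N) f) (hg : dpSupp (p ^ N) g) :
    dpLie (p ^ N) (b + 2) h
        (dpMul (p ^ N) (dpDer (p ^ N) f) (dpDer (p ^ N) g)
          - b • dpMul (p ^ N) (dpDer (p ^ N) (dpDer (p ^ N) f)) g)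
      = (dpMul (p ^ N) (dpDer (p ^ N) (dpLie (p ^ N) 0 h f)) (dpDer (p ^ N) g)
          - b • dpMul (p ^ N) (dpDer (p ^ N) (dpDer (p ^ N) (dpLie (p ^ N) 0 h f))) g)
        + (dpMul (p ^ N) (dpDer (p ^ N) f) (dpDer (p ^ N) (dpLie (p ^ N) b h g))
          - b • dpMul (p ^ N) (dpDer (p ^ N) (dpDer (p ^ N) f)) (dpLie (p ^ N) b h g)) :=
  order2_invariant_general p N hp b h f g hh hf hg
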